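/- arXiv:2507.22648 — 5 statements merged into one kernel-verified Lean document; each statement's English description precedes it below -/
import Mathlib

section
/- (Ratio Consensus, Proposition 1.) Let G = (N, E) be a strongly connected directed graph on n nodes and define the n×n matrix P by P_{lj} = 1/(1 + d_j^+) if l = j or (v_l, v_j) ∈ E, and P_{lj} = 0 otherwise. Let S ∈ ℝ^n, and define sequences y[k], x[k] ∈ ℝ^n by y[0] = S, x[0] = 𝟏 (the all-ones vector), y[k+1] = P y[k], x[k+1] = P x[k]. Then for every k, x_j[k] > 0 for all j, and for every node v_j the ratio μ_j[k] = y_j[k]/x_j[k] converges, as k → ∞, to (Σ_{i=1}^n S_i)/n, the average of the initial values. -/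
/-!
`P` is column stochastic, so `Pᵀ` is row stochastic; a positive diagonal together with strong
connectivity makes it primitive. If the `K`-th power of a row-stochastic matrix has all entries
`≥ ε > 0`, then the spread `max w - min w` of a vector shrinks by the factor `1 - ε` every `K`
steps while the minimum increases and the maximum decreases, so the powers of `Pᵀ` converge to a
matrix with identical positive rows `π`. Hence `y_j[k] → π_j ∑ S_i` and `x_j[k] → n π_j`.
-/

open Filter Topology Finset

lemma tendsto_zero_of_antitone_of_le_mul {f : ℕ → ℝ} {r : ℝ} {K : ℕ} (hf : Antitone f)
    (hf0 : ∀ k, 0 ≤ f k) (hr0 : 0 ≤ r) (hr1 : r < 1) (hK : K ≠ 0)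
    (hcontr : ∀ k, f (k + K) ≤ r * f k) : Tendsto f atTop (𝓝 0) := by
  have hgeom : ∀ i, f (i * K) ≤ r ^ i * f 0 := by
    intro i
    induction i with
    | zero => simp
    | succ i ih =>
      calc f ((i + 1) * K) = f (i * K + K) := by rw [add_one_mul]
      _ ≤ r * (r ^ i * f 0) := (hcontr _).trans (mul_le_mul_of_nonneg_left ih hr0)
      _ = r ^ (i + 1) * f 0 := by ring
  have hlim : Tendsto (fun k => r ^ (k / K) * f 0) atTop (𝓝 0) := by
    simpa using ((tendsto_pow_atTop_nhds_zero_of_lt_one hr0 hr1).comp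
      (Nat.tendsto_div_const_atTop hK)).mul_const (f 0)
  exact squeeze_zero hf0 (fun k => (hf (Nat.div_mul_le_self k K)).trans (hgeom _)) hlim

lemma exists_tendsto_of_monotone_of_antitone {m M : ℕ → ℝ} (hm : Monotone m) (hM : Antitone M)
    (hmM : ∀ k, m k ≤ M k) (hgap : Tendsto (fun k => M k - m k) atTop (𝓝 0)) :
    ∃ c, Tendsto m atTop (𝓝 c) ∧ Tendsto M atTop (𝓝 c) := by
  have hm_lim := tendsto_atTop_ciSup hm ⟨M 0, by
    rintro _ ⟨k, rfl⟩
    exact (hmM k).trans (hM k.zero_le)⟩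
  refine ⟨_, hm_lim, ?_⟩
  simpa using hm_lim.add hgap

namespace Matrix

variable {ι : Type*} [Fintype ι] [DecidableEq ι] {A : Matrix ι ι ℝ}

lemma le_mulVec_apply (hA : A ∈ rowStochastic ℝ ι) {w : ι → ℝ} {c : ℝ} (hw : ∀ j, c ≤ w j)
    (i : ι) : c ≤ (A *ᵥ w) i :=
  calc c = ∑ j, A i j * c := by rw [← sum_mul, sum_row_of_mem_rowStochastic hA, one_mul]
  _ ≤ ∑ j, A i j * w j :=
    sum_le_sum fun j _ => mul_le_mul_of_nonneg_left (hw j) (nonneg_of_mem_rowStochastic hA)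

lemma mulVec_apply_le (hA : A ∈ rowStochastic ℝ ι) {w : ι → ℝ} {c : ℝ} (hw : ∀ j, w j ≤ c)
    (i : ι) : (A *ᵥ w) i ≤ c :=
  calc ∑ j, A i j * w j ≤ ∑ j, A i j * c :=
    sum_le_sum fun j _ => mul_le_mul_of_nonneg_left (hw j) (nonneg_of_mem_rowStochastic hA)
  _ = c := by rw [← sum_mul, sum_row_of_mem_rowStochastic hA, one_mul]

lemma mulVec_apply_le_sub_mul (hA : A ∈ rowStochastic ℝ ι) {ε : ℝ} (hε : ∀ i j, ε ≤ A i j)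
    {w : ι → ℝ} {M : ℝ} (hw : ∀ j, w j ≤ M) (j₀ i : ι) :
    (A *ᵥ w) i ≤ M - ε * (M - w j₀) := by
  have hsum : (A *ᵥ w) i = ∑ j, A i j * (w j - M) + M := by
    simp only [mulVec, dotProduct, mul_sub, sum_sub_distrib, ← sum_mul,
      sum_row_of_mem_rowStochastic hA, one_mul, sub_add_cancel]
  have hterm : ∀ j, A i j * (w j - M) ≤ 0 := fun j =>
    mul_nonpos_of_nonneg_of_nonpos (nonneg_of_mem_rowStochastic hA) (sub_nonpos.2 (hw j))
  have hsingle : ∑ j, A i j * (w j - M) ≤ A i j₀ * (w j₀ - M) := by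
    rw [← add_sum_erase _ _ (mem_univ j₀)]
    exact add_le_of_nonpos_right (sum_nonpos fun j _ => hterm j)
  have hj₀ : A i j₀ * (w j₀ - M) ≤ ε * (w j₀ - M) :=
    mul_le_mul_of_nonpos_right (hε i j₀) (sub_nonpos.2 (hw j₀))
  linarith

theorem IsPrimitive.exists_tendsto_pow_mulVec [Nonempty ι] (hA : A ∈ rowStochastic ℝ ι)
    (hprim : A.IsPrimitive) (w : ι → ℝ) :
    ∃ c, ∀ i, Tendsto (fun k => (A ^ k *ᵥ w) i) atTop (𝓝 c) := by
  obtain ⟨-, K, hK, hpos⟩ := hprim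
  set ε := ⨅ p : ι × ι, (A ^ K) p.1 p.2
  have hε : ∀ i j, ε ≤ (A ^ K) i j := fun i j => ciInf_le (Finite.bddBelow_range _) (i, j)
  have hε0 : 0 < ε := by
    obtain ⟨p, hp⟩ := exists_eq_ciInf_of_finite (f := fun p : ι × ι => (A ^ K) p.1 p.2)
    exact (hpos p.1 p.2).trans_eq hp
  have hε1 : ε ≤ 1 := by
    obtain ⟨i⟩ := ‹Nonempty ι›
    exact (hε i i).trans (le_one_of_mem_rowStochastic (pow_mem hA K))
  set u : ℕ → ι → ℝ := fun k => A ^ k *ᵥ w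
  have hu : ∀ k l, u (k + l) = A ^ l *ᵥ u k := fun k l => by
    simp only [u, mulVec_mulVec, ← pow_add, add_comm]
  set m : ℕ → ℝ := fun k => ⨅ i, u k i
  set M : ℕ → ℝ := fun k => ⨆ i, u k i
  have hmu : ∀ k i, m k ≤ u k i := fun k i => ciInf_le (Finite.bddBelow_range _) i
  have huM : ∀ k i, u k i ≤ M k := fun k i => le_ciSup (Finite.bddAbove_range _) i
  have hm : Monotone m := monotone_nat_of_le_succ fun k => le_ciInf fun i => by
    rw [hu k 1]; exact le_mulVec_apply (pow_mem hA 1) (hmu k) i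
  have hM : Antitone M := antitone_nat_of_succ_le fun k => ciSup_le fun i => by
    rw [hu k 1]; exact mulVec_apply_le (pow_mem hA 1) (huM k) i
  have hcontr : ∀ k, M (k + K) - m (k + K) ≤ (1 - ε) * (M k - m k) := by
    intro k
    obtain ⟨j₀, hj₀⟩ := exists_eq_ciInf_of_finite (f := u k)
    have hMK : M (k + K) ≤ M k - ε * (M k - m k) := ciSup_le fun i => by
      have h := mulVec_apply_le_sub_mul (pow_mem hA K) hε (huM k) j₀ i
      rw [hj₀] at h
      rwa [hu k K]
    linarith [hm (k.le_add_right K)]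
  have hgap := tendsto_zero_of_antitone_of_le_mul (fun k l hkl => sub_le_sub (hM hkl) (hm hkl))
    (fun k => sub_nonneg.2 ((hmu k (Classical.arbitrary ι)).trans (huM k _)))
    (by linarith) (by linarith) hK.ne' hcontr
  obtain ⟨c, hmc, hMc⟩ := exists_tendsto_of_monotone_of_antitone hm hM
    (fun k => (hmu k (Classical.arbitrary ι)).trans (huM k _)) hgap
  exact ⟨c, fun i => tendsto_of_tendsto_of_tendsto_of_le_of_le hmc hMc (hmu · i) (huM · i)⟩

theorem IsPrimitive.exists_tendsto_pow_apply [Nonempty ι] (hA : A ∈ rowStochastic ℝ ι)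
    (hprim : A.IsPrimitive) :
    ∃ π : ι → ℝ, (∀ j, 0 < π j) ∧ ∀ i j, Tendsto (fun k => (A ^ k) i j) atTop (𝓝 (π j)) := by
  choose π hπ using fun j => hprim.exists_tendsto_pow_mulVec hA (Pi.single j 1)
  simp only [mulVec_single_one, col_apply] at hπ
  refine ⟨π, fun j => ?_, fun i j => hπ j i⟩
  obtain ⟨-, K, -, hpos⟩ := hprim
  obtain ⟨l, hl⟩ := exists_eq_ciInf_of_finite (f := fun l => (A ^ K) l j)
  have hbound : ∀ k ≥ K, (A ^ K) l j ≤ (A ^ k) j j := fun k hk => by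
    rw [← Nat.sub_add_cancel hk, pow_add]
    exact le_mulVec_apply (w := fun i => (A ^ K) i j) (pow_mem hA _)
      (fun i => hl ▸ ciInf_le (Finite.bddBelow_range _) i) j
  exact (hpos l j).trans_le (ge_of_tendsto (hπ j j) (eventually_atTop.2 ⟨K, hbound⟩))

lemma IsPrimitive.transpose (hA : A.IsPrimitive) : Aᵀ.IsPrimitive := by
  obtain ⟨hnonneg, K, hK, hpos⟩ := hA
  exact ⟨fun i j => hnonneg j i, K, hK, fun i j => by rw [← transpose_pow]; exact hpos j i⟩

theorem IsPrimitive.exists_tendsto_pow_mulVec_of_mem_colStochastic [Nonempty ι]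
    {P : Matrix ι ι ℝ} (hP : P ∈ colStochastic ℝ ι) (hprim : P.IsPrimitive) :
    ∃ π : ι → ℝ, (∀ j, 0 < π j) ∧
      ∀ v j, Tendsto (fun k => (P ^ k *ᵥ v) j) atTop (𝓝 (π j * ∑ i, v i)) := by
  obtain ⟨π, hπ0, hπ⟩ := hprim.transpose.exists_tendsto_pow_apply
    (transpose_mem_rowStochastic_iff_mem_colStochastic.2 hP)
  refine ⟨π, hπ0, fun v j => ?_⟩
  simp only [← transpose_pow, transpose_apply] at hπ
  rw [mul_sum]
  exact tendsto_finsetSum _ fun i _ => (hπ i j).mul_const (v i)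

lemma pow_apply_pos_of_le (hA : ∀ i j, 0 ≤ A i j) (hdiag : ∀ i, 0 < A i i) {k l : ℕ}
    (hkl : k ≤ l) {i j : ι} (h : 0 < (A ^ k) i j) : 0 < (A ^ l) i j := by
  induction l, hkl using Nat.le_induction with
  | base => exact h
  | succ l _ ih =>
    rw [pow_succ, mul_apply]
    exact sum_pos' (fun a _ => mul_nonneg (pow_apply_nonneg hA l i a) (hA a j))
      ⟨j, mem_univ j, mul_pos ih (hdiag j)⟩

lemma exists_pow_apply_pos_of_reflTransGen (hA : ∀ i j, 0 ≤ A i j) {i j : ι}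
    (h : Relation.ReflTransGen (fun a b => 0 < A a b) i j) : ∃ k, 0 < (A ^ k) i j := by
  induction h with
  | refl => exact ⟨0, by simp⟩
  | @tail b c _ hbc ih =>
    obtain ⟨k, hk⟩ := ih
    refine ⟨k + 1, ?_⟩
    rw [pow_succ, mul_apply]
    exact sum_pos' (fun a _ => mul_nonneg (pow_apply_nonneg hA k i a) (hA a c))
      ⟨b, mem_univ b, mul_pos hk hbc⟩

/-- A positive diagonal makes positive entries of powers persist, so one exponent serves all
pairs. -/
lemma isPrimitive_of_diag_pos (hA : ∀ i j, 0 ≤ A i j) (hdiag : ∀ i, 0 < A i i)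
    (hconn : ∀ i j, Relation.ReflTransGen (fun a b => 0 < A a b) i j) : A.IsPrimitive := by
  choose k hk using fun i j => exists_pow_apply_pos_of_reflTransGen hA (hconn i j)
  refine ⟨hA, univ.sup (fun p : ι × ι => k p.1 p.2) + 1, Nat.succ_pos _, fun i j => ?_⟩
  exact pow_apply_pos_of_le hA hdiag
    ((le_sup (f := fun p : ι × ι => k p.1 p.2) (mem_univ (i, j))).trans (Nat.le_succ _)) (hk i j)

lemma pow_mulVec_one_apply_pos (hA : ∀ i j, 0 ≤ A i j) (hdiag : ∀ i, 0 < A i i) (k : ℕ)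
    (i : ι) : 0 < (A ^ k *ᵥ 1) i :=
  sum_pos' (fun j _ => mul_nonneg (pow_apply_nonneg hA k i j) zero_le_one)
    ⟨i, mem_univ i, mul_pos (pow_apply_pos_of_le hA hdiag k.zero_le (by simp)) one_pos⟩

lemma eq_pow_mulVec_of_succ {u : ℕ → ι → ℝ} (hu : ∀ k, u (k + 1) = A *ᵥ u k) (k : ℕ) :
    u k = A ^ k *ᵥ u 0 := by
  induction k with
  | zero => simp
  | succ k ih => rw [hu, ih, mulVec_mulVec, pow_succ']

lemma mem_colStochastic_of_apply_eq_ite (E : ι → ι → Prop) [DecidableRel E]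
    (hirr : ∀ j, ¬ E j j)
    (hA : ∀ l j, A l j = if l = j ∨ E l j then (1 + (#{l | E l j} : ℝ))⁻¹ else 0) :
    A ∈ colStochastic ℝ ι := by
  refine mem_colStochastic_iff_sum.2
    ⟨fun l j => by rw [hA]; split_ifs <;> positivity, fun j => ?_⟩
  -- `j ∉ {l | E l j}` by irreflexivity, so column `j` has `1 + #{l | E l j}` nonzero entries
  have hcard : #{l | l = j ∨ E l j} = #{l | E l j} + 1 := by
    rw [filter_or, filter_eq', if_pos (mem_univ j), singleton_union,
      card_insert_of_notMem (by simp [hirr j])]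
  simp only [hA, sum_ite, sum_const_zero, add_zero, sum_const, hcard, nsmul_eq_mul]
  push_cast
  rw [add_comm, mul_inv_cancel₀ (by positivity)]

end Matrix

open Matrix

/-- Ratio Consensus, Proposition 1: on a strongly connected digraph,
with `y[0] = S`, `x[0] = 𝟏`, `y[k+1] = P y[k]`, `x[k+1] = P x[k]`, each `x_j[k] > 0`
and the ratio `y_j[k] / x_j[k]` converges to the average `(∑ i, S i) / n`. -/
theorem stmt2 (n : ℕ) (hn : 0 < n) (E : Fin n → Fin n → Prop) [DecidableRel E]
    (hirr : ∀ j, ¬ E j j)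
    (hSC : ∀ i j : Fin n, i ≠ j → Relation.TransGen E i j)
    (d : Fin n → ℕ) (hd : ∀ j, d j = (Finset.univ.filter fun l => E l j).card)
    (P : Matrix (Fin n) (Fin n) ℝ)
    (hP : ∀ l j, P l j = if l = j ∨ E l j then (1 + (d j : ℝ))⁻¹ else 0)
    (S : Fin n → ℝ) (y x : ℕ → Fin n → ℝ)
    (hy0 : y 0 = S) (hx0 : x 0 = fun _ => 1)
    (hy : ∀ k, y (k + 1) = P.mulVec (y k))
    (hx : ∀ k, x (k + 1) = P.mulVec (x k)) :
    (∀ k j, 0 < x k j) ∧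
    ∀ j, Filter.Tendsto (fun k => y k j / x k j) Filter.atTop
      (nhds ((∑ i, S i) / (n : ℝ))) := by
  have : Nonempty (Fin n) := Fin.pos_iff_nonempty.1 hn
  have hPcol : P ∈ colStochastic ℝ (Fin n) :=
    mem_colStochastic_of_apply_eq_ite E hirr fun l j => by rw [hP, hd]
  have hnonneg : ∀ i j, 0 ≤ P i j := fun _ _ => nonneg_of_mem_colStochastic hPcol
  have hdiag : ∀ j, 0 < P j j := fun j => by rw [hP, if_pos (Or.inl rfl)]; positivity
  have hconn : ∀ i j, Relation.ReflTransGen (fun a b => 0 < P a b) i j := fun i j => by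
    rcases eq_or_ne i j with rfl | hij
    · exact .refl
    · refine (Relation.TransGen.mono (fun a b hab => ?_) i j (hSC i j hij)).to_reflTransGen
      rw [hP, if_pos (Or.inr hab)]; positivity
  obtain ⟨π, hπ0, hπ⟩ :=
    (isPrimitive_of_diag_pos hnonneg hdiag hconn).exists_tendsto_pow_mulVec_of_mem_colStochastic
      hPcol
  have hyk : ∀ k, y k = P ^ k *ᵥ S := fun k => hy0 ▸ eq_pow_mulVec_of_succ hy k
  have hxk : ∀ k, x k = P ^ k *ᵥ 1 := fun k => by
    rw [eq_pow_mulVec_of_succ hx k, hx0]; rfl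
  refine ⟨fun k j => hxk k ▸ pow_mulVec_one_apply_pos hnonneg hdiag k j, fun j => ?_⟩
  have hlim := (hπ S j).div (hπ 1 j) (by simpa using ⟨(hπ0 j).ne', hn.ne'⟩)
  simp only [← hyk, ← hxk, Pi.one_apply, sum_const, card_univ, Fintype.card_fin, nsmul_eq_mul,
    mul_one] at hlim
  rwa [mul_div_mul_left _ _ (hπ0 j).ne'] at hlim
end

section
/- Let P ∈ ℝ^{n×n} be a primitive column stochastic matrix, let y0 ∈ ℝ^n be arbitrary, and let x0 ∈ ℝ^n have all entries strictly positive. Then for every index j the ratio (P^k y0)_j / (P^k x0)_j converges, as k → ∞, to (Σ_{i=1}^n (y0)_i) / (Σ_{i=1}^n (x0)_i). In particular, taking x0 = 𝟏, the limit equals the average (Σ_i (y0)_i)/n. -/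
set_option maxHeartbeats 1000000 in
/-- for a primitive column stochastic matrix `P`, arbitrary `y0`, and
entrywise positive `x0`, the ratio `(P^k y0)_j / (P^k x0)_j` converges to
`(∑ i, y0 i) / (∑ i, x0 i)` for every `j`; in particular, with `x0 = 𝟏` the limit is the
average `(∑ i, y0 i) / n`. -/
theorem stmt7 (n : ℕ) (P : Matrix (Fin n) (Fin n) ℝ)
    (hnn : ∀ i j, 0 ≤ P i j) (hcol : ∀ j, ∑ i, P i j = 1)
    (hprim : ∃ k : ℕ, 1 ≤ k ∧ ∀ i j, 0 < (P ^ k) i j)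
    (y0 x0 : Fin n → ℝ) (hx0 : ∀ i, 0 < x0 i) :
    ∀ j, Filter.Tendsto
      (fun k => ((P ^ k).mulVec y0) j / ((P ^ k).mulVec x0) j)
      Filter.atTop (nhds ((∑ i, y0 i) / (∑ i, x0 i))) := by
  intro j
  haveI hne : Nonempty (Fin n) := ⟨j⟩
  obtain ⟨m, hm1, hQ⟩ := hprim
  set Q : Matrix (Fin n) (Fin n) ℝ := P ^ m with hQdef
  set w : ℕ → Fin n → ℝ := fun k => (P ^ k).mulVec x0 with hwdef
  set u : ℕ → Fin n → ℝ := fun k => (P ^ k).mulVec y0 with hudef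
  set S : ℝ := ∑ i, x0 i with hSdef
  set Y : ℝ := ∑ i, y0 i with hYdef
  have hS : 0 < S := Finset.sum_pos (fun i _ => hx0 i) Finset.univ_nonempty
  set L : ℝ := Y / S with hLdef
  -- sum preservation under one application of P
  have hsum1 : ∀ v : Fin n → ℝ, ∑ i, P.mulVec v i = ∑ i, v i := by
    intro v
    simp only [Matrix.mulVec, dotProduct]
    rw [Finset.sum_comm]
    refine Finset.sum_congr rfl fun t _ => ?_
    rw [← Finset.sum_mul, hcol, one_mul]
  have hwstep : ∀ k, w (k + 1) = P.mulVec (w k) := by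
    intro k
    show (P ^ (k + 1)).mulVec x0 = _
    rw [pow_succ', ← Matrix.mulVec_mulVec]
  have hustep : ∀ k, u (k + 1) = P.mulVec (u k) := by
    intro k
    show (P ^ (k + 1)).mulVec y0 = _
    rw [pow_succ', ← Matrix.mulVec_mulVec]
  have hwQ : ∀ k, m ≤ k → w k = Q.mulVec (w (k - m)) := by
    intro k hk
    show (P ^ k).mulVec x0 = _
    have hmk : m + (k - m) = k := by omega
    rw [hwdef, hQdef, Matrix.mulVec_mulVec, ← pow_add, hmk]
  have huQ : ∀ k, u (k + m) = Q.mulVec (u k) := by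
    intro k
    show (P ^ (k + m)).mulVec y0 = _
    rw [hudef, hQdef, Matrix.mulVec_mulVec, ← pow_add, add_comm m k]
  have hwQ' : ∀ k, w (k + m) = Q.mulVec (w k) := by
    intro k
    show (P ^ (k + m)).mulVec x0 = _
    rw [hwdef, hQdef, Matrix.mulVec_mulVec, ← pow_add, add_comm m k]
  have hw0 : w 0 = x0 := by show (P ^ 0).mulVec x0 = x0; rw [pow_zero, Matrix.one_mulVec]
  have hu0 : u 0 = y0 := by show (P ^ 0).mulVec y0 = y0; rw [pow_zero, Matrix.one_mulVec]
  have hsumw : ∀ k, ∑ i, w k i = S := by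
    intro k
    induction k with
    | zero => rw [hw0]
    | succ k ih => rw [hwstep k, hsum1, ih]
  have hsumu : ∀ k, ∑ i, u k i = Y := by
    intro k
    induction k with
    | zero => rw [hu0]
    | succ k ih => rw [hustep k, hsum1, ih]
  -- each row of P has a positive entry
  have hrow : ∀ i : Fin n, ∃ t, 0 < P i t := by
    intro i
    by_contra h
    push_neg at h
    have hz : ∀ t, P i t = 0 := fun t => le_antisymm (h t) (hnn i t)
    obtain ⟨m', rfl⟩ : ∃ m', m = m' + 1 := ⟨m - 1, by omega⟩
    have : Q i j = 0 := by
      rw [hQdef, pow_succ', Matrix.mul_apply]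
      exact Finset.sum_eq_zero fun t _ => by rw [hz t, zero_mul]
    exact absurd this (ne_of_gt (hQ i j))
  have hw : ∀ k i, 0 < w k i := by
    intro k
    induction k with
    | zero => rw [hw0]; exact hx0
    | succ k ih =>
      intro i
      rw [hwstep k]
      obtain ⟨t, ht⟩ := hrow i
      refine Finset.sum_pos' (fun t' _ => mul_nonneg (hnn i t') (ih t').le) ⟨t, Finset.mem_univ t, mul_pos ht (ih t)⟩
  set r : ℕ → Fin n → ℝ := fun k i => u k i / w k i with hrdef
  set Mx : ℕ → ℝ := fun k => Finset.univ.sup' Finset.univ_nonempty (r k) with hMxdef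
  set mn : ℕ → ℝ := fun k => Finset.univ.inf' Finset.univ_nonempty (r k) with hmndef
  have hr_le : ∀ k i, r k i ≤ Mx k := fun k i => Finset.le_sup' (r k) (Finset.mem_univ i)
  have hr_ge : ∀ k i, mn k ≤ r k i := fun k i => Finset.inf'_le (r k) (Finset.mem_univ i)
  have huw : ∀ k i, u k i = r k i * w k i := fun k i => (div_mul_cancel₀ _ (hw k i).ne').symm
  have hub : ∀ k i, u k i ≤ Mx k * w k i := fun k i => by
    rw [huw k i]; exact mul_le_mul_of_nonneg_right (hr_le k i) (hw k i).le
  have hlb : ∀ k i, mn k * w k i ≤ u k i := fun k i => by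
    rw [huw k i]; exact mul_le_mul_of_nonneg_right (hr_ge k i) (hw k i).le
  -- generic step bounds
  have hgen_le : ∀ (A : Matrix (Fin n) (Fin n) ℝ), (∀ a b, 0 ≤ A a b) → ∀ (C : ℝ) (k : ℕ),
      (∀ i, u k i ≤ C * w k i) → ∀ i, A.mulVec (u k) i ≤ C * A.mulVec (w k) i := by
    intro A hA C k h i
    simp only [Matrix.mulVec, dotProduct, Finset.mul_sum]
    refine Finset.sum_le_sum fun t _ => ?_
    rw [mul_left_comm]
    exact mul_le_mul_of_nonneg_left (h t) (hA i t)
  have hgen_ge : ∀ (A : Matrix (Fin n) (Fin n) ℝ), (∀ a b, 0 ≤ A a b) → ∀ (C : ℝ) (k : ℕ),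
      (∀ i, C * w k i ≤ u k i) → ∀ i, C * A.mulVec (w k) i ≤ A.mulVec (u k) i := by
    intro A hA C k h i
    simp only [Matrix.mulVec, dotProduct, Finset.mul_sum]
    refine Finset.sum_le_sum fun t _ => ?_
    rw [mul_left_comm]
    exact mul_le_mul_of_nonneg_left (h t) (hA i t)
  have hstep_le : ∀ k i, r (k + 1) i ≤ Mx k := by
    intro k i
    have h1 : u (k + 1) i ≤ Mx k * w (k + 1) i := by
      rw [hustep k, hwstep k]
      exact hgen_le P hnn (Mx k) k (hub k) i
    show u (k + 1) i / w (k + 1) i ≤ Mx k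
    rw [div_le_iff₀ (hw (k + 1) i)]
    exact h1
  have hstep_ge : ∀ k i, mn k ≤ r (k + 1) i := by
    intro k i
    have h1 : mn k * w (k + 1) i ≤ u (k + 1) i := by
      rw [hustep k, hwstep k]
      exact hgen_ge P hnn (mn k) k (hlb k) i
    show mn k ≤ u (k + 1) i / w (k + 1) i
    rw [le_div_iff₀ (hw (k + 1) i)]
    exact h1
  have hM_mono : ∀ k, Mx (k + 1) ≤ Mx k :=
    fun k => Finset.sup'_le _ _ fun i _ => hstep_le k i
  have hm_mono : ∀ k, mn k ≤ mn (k + 1) :=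
    fun k => Finset.le_inf' _ _ fun i _ => hstep_ge k i
  -- L between mn k and Mx k
  have hLle : ∀ k, L ≤ Mx k := by
    intro k
    rw [hLdef, div_le_iff₀ hS]
    calc Y = ∑ i, u k i := (hsumu k).symm
    _ ≤ ∑ i, Mx k * w k i := Finset.sum_le_sum fun i _ => hub k i
    _ = Mx k * S := by rw [← Finset.mul_sum, hsumw k]
  have hLge : ∀ k, mn k ≤ L := by
    intro k
    rw [hLdef, le_div_iff₀ hS]
    calc mn k * S = ∑ i, mn k * w k i := by rw [← Finset.mul_sum, hsumw k]
    _ ≤ ∑ i, u k i := Finset.sum_le_sum fun i _ => hlb k i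
    _ = Y := hsumu k
  have hoscnn : ∀ k, 0 ≤ Mx k - mn k := fun k => by linarith [hr_le k j, hr_ge k j]
  -- epsilon: min entry of Q
  set ε : ℝ := Finset.univ.inf' Finset.univ_nonempty
      (fun p : Fin n × Fin n => Q p.1 p.2) with hεdef
  have hεpos : 0 < ε := by
    obtain ⟨p, _, hp⟩ := Finset.exists_mem_eq_inf' (Finset.univ_nonempty)
      (fun p : Fin n × Fin n => Q p.1 p.2)
    rw [hεdef, hp]
    exact hQ p.1 p.2
  have hεle : ∀ a b, ε ≤ Q a b := fun a b =>
    Finset.inf'_le (fun p : Fin n × Fin n => Q p.1 p.2) (Finset.mem_univ (a, b))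
  -- lower bound on w for k ≥ m
  have hwlow : ∀ k, m ≤ k → ∀ i, ε * S ≤ w k i := by
    intro k hk i
    rw [hwQ k hk]
    calc ε * S = ∑ t, ε * w (k - m) t := by rw [← Finset.mul_sum, hsumw (k - m)]
    _ ≤ ∑ t, Q i t * w (k - m) t :=
        Finset.sum_le_sum fun t _ => mul_le_mul_of_nonneg_right (hεle i t) (hw (k - m) t).le
    _ = Q.mulVec (w (k - m)) i := rfl
  have hwup : ∀ k i, w k i ≤ S := by
    intro k i
    rw [← hsumw k]
    exact Finset.single_le_sum (fun t _ => (hw k t).le) (Finset.mem_univ i)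
  -- theta
  set θ : ℝ := min (ε * ε) (1 / 2) with hθdef
  have hθpos : 0 < θ := lt_min (mul_pos hεpos hεpos) (by norm_num)
  have hθhalf : θ ≤ 1 / 2 := min_le_right _ _
  have hθε : θ ≤ ε * ε := min_le_left _ _
  -- contraction: core lower bound
  have hcore_ge : ∀ k, m ≤ k → ∀ i, mn k + θ * (Mx k - mn k) ≤ r (k + m) i := by
    intro k hk i
    obtain ⟨i₁, _, hi₁⟩ := Finset.exists_mem_eq_sup' (Finset.univ_nonempty) (r k)
    have hD : 0 ≤ Mx k - mn k := hoscnn k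
    have hwk1 : ε * S ≤ w k i₁ := hwlow k hk i₁
    have hQi : ε ≤ Q i i₁ := hεle i i₁
    -- u (k+m) i ≥ mn k * w (k+m) i + Q i i₁ * (u k i₁ - mn k * w k i₁)
    have key : mn k * w (k + m) i + Q i i₁ * (u k i₁ - mn k * w k i₁) ≤ u (k + m) i := by
      rw [huQ k, hwQ' k]
      have h1 : ∑ t, Q i t * (u k t - mn k * w k t)
          = Q.mulVec (u k) i - mn k * Q.mulVec (w k) i := by
        simp only [Matrix.mulVec, dotProduct, Finset.mul_sum, ← Finset.sum_sub_distrib]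
        refine Finset.sum_congr rfl fun t _ => by ring
      have h2 : Q i i₁ * (u k i₁ - mn k * w k i₁) ≤ ∑ t, Q i t * (u k t - mn k * w k t) :=
        Finset.single_le_sum (f := fun t => Q i t * (u k t - mn k * w k t))
          (fun t _ => mul_nonneg ((hεpos.trans_le (hεle i t)).le)
            (by linarith [hlb k t])) (Finset.mem_univ i₁)
      rw [h1] at h2
      linarith
    have hui₁ : u k i₁ - mn k * w k i₁ = (Mx k - mn k) * w k i₁ := by
      rw [huw k i₁, ← hi₁]
      ring
    rw [hui₁] at key
    have hprod : ε * ε * S * (Mx k - mn k) ≤ Q i i₁ * ((Mx k - mn k) * w k i₁) := by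
      have h3 : ε * (ε * S) ≤ Q i i₁ * w k i₁ :=
        mul_le_mul hQi hwk1 (by positivity) ((hεpos.le).trans hQi)
      nlinarith [hD, h3, hεpos.le, hS.le]
    have hwkm : w (k + m) i ≤ S := hwup (k + m) i
    have hwkmpos : 0 < w (k + m) i := hw (k + m) i
    show mn k + θ * (Mx k - mn k) ≤ u (k + m) i / w (k + m) i
    rw [le_div_iff₀ hwkmpos]
    have hθD : θ * (Mx k - mn k) * w (k + m) i ≤ ε * ε * S * (Mx k - mn k) := by
      have hDw : 0 ≤ (Mx k - mn k) * w (k + m) i := mul_nonneg hD hwkmpos.le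
      have a1 : θ * ((Mx k - mn k) * w (k + m) i)
          ≤ (ε * ε) * ((Mx k - mn k) * w (k + m) i) :=
        mul_le_mul_of_nonneg_right hθε hDw
      have a2 : (ε * ε) * ((Mx k - mn k) * w (k + m) i)
          ≤ (ε * ε) * ((Mx k - mn k) * S) :=
        mul_le_mul_of_nonneg_left (mul_le_mul_of_nonneg_left hwkm hD) (by positivity)
      nlinarith [a1, a2]
    nlinarith [key, hprod, hθD]
  have hcore_le : ∀ k, m ≤ k → ∀ i, r (k + m) i ≤ Mx k - θ * (Mx k - mn k) := by
    intro k hk i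
    obtain ⟨i₀, _, hi₀⟩ := Finset.exists_mem_eq_inf' (Finset.univ_nonempty) (r k)
    have hD : 0 ≤ Mx k - mn k := hoscnn k
    have hwk0 : ε * S ≤ w k i₀ := hwlow k hk i₀
    have hQi : ε ≤ Q i i₀ := hεle i i₀
    have key : u (k + m) i ≤ Mx k * w (k + m) i - Q i i₀ * (Mx k * w k i₀ - u k i₀) := by
      rw [huQ k, hwQ' k]
      have h1 : ∑ t, Q i t * (Mx k * w k t - u k t)
          = Mx k * Q.mulVec (w k) i - Q.mulVec (u k) i := by
        simp only [Matrix.mulVec, dotProduct, Finset.mul_sum, ← Finset.sum_sub_distrib]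
        refine Finset.sum_congr rfl fun t _ => by ring
      have h2 : Q i i₀ * (Mx k * w k i₀ - u k i₀) ≤ ∑ t, Q i t * (Mx k * w k t - u k t) :=
        Finset.single_le_sum (f := fun t => Q i t * (Mx k * w k t - u k t))
          (fun t _ => mul_nonneg ((hεpos.trans_le (hεle i t)).le)
            (by linarith [hub k t])) (Finset.mem_univ i₀)
      rw [h1] at h2
      linarith
    have hui₀ : Mx k * w k i₀ - u k i₀ = (Mx k - mn k) * w k i₀ := by
      rw [huw k i₀, ← hi₀]
      ring
    rw [hui₀] at key
    have hprod : ε * ε * S * (Mx k - mn k) ≤ Q i i₀ * ((Mx k - mn k) * w k i₀) := by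
      have h3 : ε * (ε * S) ≤ Q i i₀ * w k i₀ :=
        mul_le_mul hQi hwk0 (by positivity) ((hεpos.le).trans hQi)
      nlinarith [hD, h3, hεpos.le, hS.le]
    have hwkm : w (k + m) i ≤ S := hwup (k + m) i
    have hwkmpos : 0 < w (k + m) i := hw (k + m) i
    show u (k + m) i / w (k + m) i ≤ Mx k - θ * (Mx k - mn k)
    rw [div_le_iff₀ hwkmpos]
    have hθD : θ * (Mx k - mn k) * w (k + m) i ≤ ε * ε * S * (Mx k - mn k) := by
      have hDw : 0 ≤ (Mx k - mn k) * w (k + m) i := mul_nonneg hD hwkmpos.le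
      have a1 : θ * ((Mx k - mn k) * w (k + m) i)
          ≤ (ε * ε) * ((Mx k - mn k) * w (k + m) i) :=
        mul_le_mul_of_nonneg_right hθε hDw
      have a2 : (ε * ε) * ((Mx k - mn k) * w (k + m) i)
          ≤ (ε * ε) * ((Mx k - mn k) * S) :=
        mul_le_mul_of_nonneg_left (mul_le_mul_of_nonneg_left hwkm hD) (by positivity)
      nlinarith [a1, a2]
    nlinarith [key, hprod, hθD]
  -- oscillation and contraction
  set osc : ℕ → ℝ := fun k => Mx k - mn k with hoscdef
  have hcontr : ∀ k, m ≤ k → osc (k + m) ≤ (1 - 2 * θ) * osc k := by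
    intro k hk
    have hMle : Mx (k + m) ≤ Mx k - θ * (Mx k - mn k) :=
      Finset.sup'_le _ _ fun i _ => hcore_le k hk i
    have hmge : mn k + θ * (Mx k - mn k) ≤ mn (k + m) :=
      Finset.le_inf' _ _ fun i _ => hcore_ge k hk i
    show Mx (k + m) - mn (k + m) ≤ (1 - 2 * θ) * (Mx k - mn k)
    linarith
  have hant : Antitone osc := by
    apply antitone_nat_of_succ_le
    intro k
    show Mx (k + 1) - mn (k + 1) ≤ Mx k - mn k
    linarith [hM_mono k, hm_mono k]
  have hosc_nonneg : ∀ k, 0 ≤ osc k := hoscnn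
  have hc0 : 0 ≤ 1 - 2 * θ := by linarith
  have hc1 : 1 - 2 * θ < 1 := by linarith
  have hgeo : ∀ q : ℕ, osc (m + q * m) ≤ (1 - 2 * θ) ^ q * osc m := by
    intro q
    induction q with
    | zero => simp
    | succ q ih =>
      have h1 : m + (q + 1) * m = (m + q * m) + m := by ring
      rw [h1]
      calc osc ((m + q * m) + m) ≤ (1 - 2 * θ) * osc (m + q * m) :=
            hcontr (m + q * m) (by omega)
      _ ≤ (1 - 2 * θ) * ((1 - 2 * θ) ^ q * osc m) := by
            exact mul_le_mul_of_nonneg_left ih hc0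
      _ = (1 - 2 * θ) ^ (q + 1) * osc m := by ring
  have hosc0 : Filter.Tendsto osc Filter.atTop (nhds 0) := by
    rw [Metric.tendsto_atTop]
    intro δ hδ
    have hpow : Filter.Tendsto (fun q : ℕ => (1 - 2 * θ) ^ q * osc m)
        Filter.atTop (nhds 0) := by
      simpa using (tendsto_pow_atTop_nhds_zero_of_lt_one hc0 hc1).mul_const (osc m)
    obtain ⟨q, hq⟩ := (hpow.eventually (gt_mem_nhds hδ)).exists
    refine ⟨m + q * m, fun k hk => ?_⟩
    rw [Real.dist_eq, sub_zero, abs_of_nonneg (hosc_nonneg k)]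
    calc osc k ≤ osc (m + q * m) := hant hk
    _ ≤ (1 - 2 * θ) ^ q * osc m := hgeo q
    _ < δ := hq
  have habs : ∀ k, |r k j - L| ≤ osc k := by
    intro k
    have h1 := hr_le k j
    have h2 := hr_ge k j
    have h3 := hLle k
    have h4 := hLge k
    rw [abs_le]
    constructor
    · show -(Mx k - mn k) ≤ r k j - L
      linarith
    · show r k j - L ≤ Mx k - mn k
      linarith
  have hsq : Filter.Tendsto (fun k => |r k j - L|) Filter.atTop (nhds 0) :=
    squeeze_zero (fun k => abs_nonneg _) habs hosc0
  have hfin : Filter.Tendsto (fun k => r k j) Filter.atTop (nhds L) := by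
    rw [tendsto_iff_dist_tendsto_zero]
    simpa [Real.dist_eq] using hsq
  exact hfin
end

section
/- (Theorem 1, Over-the-Air Ratio Consensus with time-invariant channels.) Let H ∈ ℝ^{n×n} be a symmetric matrix with nonnegative entries and strictly positive row sums σ_j = Σ_i H_{ji}, and suppose the normalized matrix H̄ = HΣ, with Σ = diag(1/σ_1, …, 1/σ_n), is primitive. Let S ∈ ℝ^n and define the sequences ỹ[k], x̃[k] ∈ ℝ^n by ỹ[0] = S, x̃[0] = 𝟏, ỹ[k+1] = H̄ ỹ[k], and x̃[k+1] = H̄ x̃[k] (equivalently, each node transmits the normalized values y_j[k] = ỹ_j[k]/σ_j, x_j[k] = x̃_j[k]/σ_j and receives the channel-weighted sums ỹ_j[k+1] = Σ_i H_{ji} y_i[k], x̃_j[k+1] = Σ_i H_{ji} x_i[k]). Then for every node j the ratio μ_j[k] = ỹ_j[k]/x̃_j[k] converges, as k → ∞, to (Σ_{i=1}^n S_i)/n, the exact average of the initial values. -/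
open Filter Finset

/-- A weighted average with weights each at least `c` is at most `sup - c*(sup-inf)`. -/
lemma wavg_le {n : ℕ} [Nonempty (Fin n)] (w r : Fin n → ℝ) (hw : ∀ i, 0 ≤ w i)
    (hsum : ∑ i, w i = 1) {c : ℝ} (hc : ∀ i, c ≤ w i) :
    ∑ i, w i * r i ≤ Finset.univ.sup' Finset.univ_nonempty r
      - c * (Finset.univ.sup' Finset.univ_nonempty r
        - Finset.univ.inf' Finset.univ_nonempty r) := by
  set Mx := Finset.univ.sup' Finset.univ_nonempty r with hMx
  set mn := Finset.univ.inf' Finset.univ_nonempty r with hmn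
  obtain ⟨i0, _, hi0⟩ := Finset.exists_mem_eq_inf' (Finset.univ_nonempty) r
  have hsub : ∀ i : Fin n, r i ≤ Mx := fun i => Finset.le_sup' r (Finset.mem_univ i)
  have hinf : ∀ i : Fin n, mn ≤ r i := fun i => Finset.inf'_le r (Finset.mem_univ i)
  have h1 : c * (Mx - mn) ≤ ∑ i, w i * (Mx - r i) := by
    have hterm : c * (Mx - mn) ≤ w i0 * (Mx - r i0) := by
      rw [show r i0 = mn from hi0.symm]
      exact mul_le_mul_of_nonneg_right (hc i0) (by linarith [hsub i0, hinf i0])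
    refine hterm.trans (Finset.single_le_sum (f := fun i => w i * (Mx - r i))
      (fun i _ => mul_nonneg (hw i) (by linarith [hsub i])) (Finset.mem_univ i0))
  have h2 : ∑ i, w i * r i = Mx - ∑ i, w i * (Mx - r i) := by
    have : ∑ i, w i * (Mx - r i) = (∑ i, w i) * Mx - ∑ i, w i * r i := by
      rw [Finset.sum_mul, ← Finset.sum_sub_distrib]
      exact Finset.sum_congr rfl fun i _ => by ring
    rw [this, hsum]; ring
  linarith

lemma wavg_ge {n : ℕ} [Nonempty (Fin n)] (w r : Fin n → ℝ) (hw : ∀ i, 0 ≤ w i)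
    (hsum : ∑ i, w i = 1) {c : ℝ} (hc : ∀ i, c ≤ w i) :
    Finset.univ.inf' Finset.univ_nonempty r
      + c * (Finset.univ.sup' Finset.univ_nonempty r
        - Finset.univ.inf' Finset.univ_nonempty r) ≤ ∑ i, w i * r i := by
  set Mx := Finset.univ.sup' Finset.univ_nonempty r with hMx
  set mn := Finset.univ.inf' Finset.univ_nonempty r with hmn
  obtain ⟨i0, _, hi0⟩ := Finset.exists_mem_eq_sup' (Finset.univ_nonempty) r
  have hsub : ∀ i : Fin n, r i ≤ Mx := fun i => Finset.le_sup' r (Finset.mem_univ i)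
  have hinf : ∀ i : Fin n, mn ≤ r i := fun i => Finset.inf'_le r (Finset.mem_univ i)
  have h1 : c * (Mx - mn) ≤ ∑ i, w i * (r i - mn) := by
    have hterm : c * (Mx - mn) ≤ w i0 * (r i0 - mn) := by
      rw [show r i0 = Mx from hi0.symm]
      exact mul_le_mul_of_nonneg_right (hc i0) (by linarith [hsub i0, hinf i0])
    refine hterm.trans (Finset.single_le_sum (f := fun i => w i * (r i - mn))
      (fun i _ => mul_nonneg (hw i) (by linarith [hinf i])) (Finset.mem_univ i0))
  have h2 : ∑ i, w i * r i = mn + ∑ i, w i * (r i - mn) := by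
    have : ∑ i, w i * (r i - mn) = ∑ i, w i * r i - (∑ i, w i) * mn := by
      rw [Finset.sum_mul, ← Finset.sum_sub_distrib]
      exact Finset.sum_congr rfl fun i _ => by ring
    rw [this, hsum]; ring
  linarith

/-- Theorem 1, Over-the-Air Ratio Consensus with time-invariant channels:
with `H` symmetric nonnegative with positive row sums `σ`, `H̄ = H Σ` primitive,
`ỹ[0] = S`, `x̃[0] = 𝟏`, `ỹ[k+1] = H̄ ỹ[k]`, `x̃[k+1] = H̄ x̃[k]`, the ratio
`μ_j[k] = ỹ_j[k] / x̃_j[k]` converges to the exact average `(∑ i, S i) / n`. -/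
theorem stmt8 (n : ℕ) (hn : 0 < n) (H : Matrix (Fin n) (Fin n) ℝ)
    (hsymm : H.IsSymm) (hnn : ∀ i j, 0 ≤ H i j)
    (σ : Fin n → ℝ) (hσ : ∀ j, σ j = ∑ i, H j i) (hσpos : ∀ j, 0 < σ j)
    (Hbar : Matrix (Fin n) (Fin n) ℝ)
    (hHbar : Hbar = H * Matrix.diagonal fun j => (σ j)⁻¹)
    (hprim : ∃ k : ℕ, 1 ≤ k ∧ ∀ i j, 0 < (Hbar ^ k) i j)
    (S : Fin n → ℝ) (ytil xtil : ℕ → Fin n → ℝ)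
    (hy0 : ytil 0 = S) (hx0 : xtil 0 = fun _ => 1)
    (hy : ∀ k, ytil (k + 1) = Hbar.mulVec (ytil k))
    (hx : ∀ k, xtil (k + 1) = Hbar.mulVec (xtil k)) :
    ∀ j, Filter.Tendsto (fun k => ytil k j / xtil k j) Filter.atTop
      (nhds ((∑ i, S i) / (n : ℝ))) := by
  haveI : Nonempty (Fin n) := ⟨⟨0, hn⟩⟩
  obtain ⟨K, hK1, hKpos⟩ := hprim
  have hbnn : ∀ i j, 0 ≤ Hbar i j := by
    intro i j
    rw [hHbar, Matrix.mul_diagonal]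
    exact mul_nonneg (hnn i j) (inv_nonneg.2 (hσpos j).le)
  have hpownn : ∀ (m : ℕ) (i j : Fin n), 0 ≤ (Hbar ^ m) i j := by
    intro m
    induction m with
    | zero => intro i j; rw [pow_zero]; by_cases h : i = j <;> simp [Matrix.one_apply, h]
    | succ m ih =>
      intro i j
      rw [pow_succ, Matrix.mul_apply]
      exact Finset.sum_nonneg fun k _ => mul_nonneg (ih i k) (hbnn k j)
  have hcol : ∀ j, ∑ i, Hbar i j = 1 := by
    intro j
    have h1 : ∑ i, H i j = σ j := by
      rw [hσ j]
      exact Finset.sum_congr rfl fun i _ => hsymm.apply j i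
    simp only [hHbar, Matrix.mul_diagonal]
    rw [← Finset.sum_mul, h1, mul_inv_cancel₀ (hσpos j).ne']
  have hmv : ∀ (A : Matrix (Fin n) (Fin n) ℝ) (v : Fin n → ℝ) (j : Fin n),
      A.mulVec v j = ∑ i, A j i * v i := fun _ _ _ => rfl
  have hsumpres : ∀ v : Fin n → ℝ, ∑ j, Hbar.mulVec v j = ∑ j, v j := by
    intro v
    simp only [hmv]
    rw [Finset.sum_comm]
    exact Finset.sum_congr rfl fun i _ => by rw [← Finset.sum_mul, hcol i, one_mul]
  have hxsum : ∀ k, ∑ j, xtil k j = n := by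
    intro k
    induction k with
    | zero => rw [hx0]; simp
    | succ k ih => rw [hx k, hsumpres, ih]
  have hysum : ∀ k, ∑ j, ytil k j = ∑ i, S i := by
    intro k
    induction k with
    | zero => rw [hy0]
    | succ k ih => rw [hy k, hsumpres, ih]
  have hrowpos : ∀ j, ∃ i, 0 < Hbar j i := by
    intro j
    have hKsplit : Hbar ^ K = Hbar * Hbar ^ (K - 1) := by
      conv_lhs => rw [show K = 1 + (K - 1) from (Nat.add_sub_cancel' hK1).symm]
      rw [pow_add, pow_one]
    have hp := hKpos j j
    rw [hKsplit, Matrix.mul_apply] at hp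
    by_contra h
    push_neg at h
    have hz : ∑ i, Hbar j i * (Hbar ^ (K - 1)) i j = 0 :=
      Finset.sum_eq_zero fun i _ => by
        rw [le_antisymm (h i) (hbnn j i)]; ring
    rw [hz] at hp
    exact lt_irrefl 0 hp
  have hxpos : ∀ k j, 0 < xtil k j := by
    intro k
    induction k with
    | zero => intro j; rw [hx0]; norm_num
    | succ k ih =>
      intro j
      rw [hx k, hmv]
      obtain ⟨i, hi⟩ := hrowpos j
      exact Finset.sum_pos' (fun i _ => mul_nonneg (hbnn j i) (ih i).le)
        ⟨i, Finset.mem_univ i, mul_pos hi (ih i)⟩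
  have hxle : ∀ k j, xtil k j ≤ n := by
    intro k j
    calc xtil k j ≤ ∑ i, xtil k i :=
          Finset.single_le_sum (fun i _ => (hxpos k i).le) (Finset.mem_univ j)
      _ = n := hxsum k
  have hstep : ∀ (m k : ℕ), xtil (k + m) = (Hbar ^ m).mulVec (xtil k)
      ∧ ytil (k + m) = (Hbar ^ m).mulVec (ytil k) := by
    intro m
    induction m with
    | zero => intro k; simp [Matrix.one_mulVec]
    | succ m ih =>
      intro k
      constructor
      · rw [show k + (m + 1) = (k + m) + 1 from rfl, hx, (ih k).1,
          Matrix.mulVec_mulVec, ← pow_succ']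
      · rw [show k + (m + 1) = (k + m) + 1 from rfl, hy, (ih k).2,
          Matrix.mulVec_mulVec, ← pow_succ']
  set δ : ℝ := Finset.univ.inf' Finset.univ_nonempty
    (fun p : Fin n × Fin n => (Hbar ^ K) p.1 p.2) with hδdef
  have hδle : ∀ i j, δ ≤ (Hbar ^ K) i j := fun i j =>
    Finset.inf'_le _ (Finset.mem_univ (i, j))
  have hδpos : 0 < δ := by
    obtain ⟨p, _, hp⟩ := Finset.exists_mem_eq_inf' (Finset.univ_nonempty)
      (fun p : Fin n × Fin n => (Hbar ^ K) p.1 p.2)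
    rw [hδdef, hp]; exact hKpos p.1 p.2
  have hxlb : ∀ k j, δ * n ≤ xtil (k + K) j := by
    intro k j
    rw [(hstep K k).1, hmv]
    calc δ * n = ∑ i, δ * xtil k i := by rw [← Finset.mul_sum, hxsum k]
      _ ≤ ∑ i, (Hbar ^ K) j i * xtil k i :=
          Finset.sum_le_sum fun i _ => mul_le_mul_of_nonneg_right (hδle j i) (hxpos k i).le
  set r : ℕ → Fin n → ℝ := fun k j => ytil k j / xtil k j with hrdef
  set Mx : ℕ → ℝ := fun k => Finset.univ.sup' Finset.univ_nonempty (r k) with hMxdef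
  set mx : ℕ → ℝ := fun k => Finset.univ.inf' Finset.univ_nonempty (r k) with hmxdef
  have hwsum : ∀ (m k : ℕ) (j : Fin n),
      ∑ i, (Hbar ^ m) j i * xtil k i / xtil (k + m) j = 1 := by
    intro m k j
    rw [← Finset.sum_div,
      show ∑ i, (Hbar ^ m) j i * xtil k i = xtil (k + m) j from by rw [(hstep m k).1, hmv]]
    exact div_self (hxpos (k + m) j).ne'
  have htrans : ∀ (m k : ℕ) (j : Fin n),
      r (k + m) j = ∑ i, ((Hbar ^ m) j i * xtil k i / xtil (k + m) j) * r k i := by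
    intro m k j
    have hre : ∀ i, ((Hbar ^ m) j i * xtil k i / xtil (k + m) j) * r k i
        = (Hbar ^ m) j i * ytil k i / xtil (k + m) j := by
      intro i
      have hxi := (hxpos k i).ne'
      have hX := (hxpos (k + m) j).ne'
      simp only [hrdef]
      field_simp
    rw [Finset.sum_congr rfl fun i _ => hre i, ← Finset.sum_div]
    simp only [hrdef]
    rw [(hstep m k).2, hmv]
  have hkey : ∀ (m k : ℕ) (c : ℝ), 0 ≤ c →
      (∀ (j i : Fin n), c ≤ (Hbar ^ m) j i * xtil k i / xtil (k + m) j) →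
      Mx (k + m) ≤ Mx k - c * (Mx k - mx k) ∧ mx k + c * (Mx k - mx k) ≤ mx (k + m) := by
    intro m k c hc0 hc
    have hw : ∀ (j i : Fin n), 0 ≤ (Hbar ^ m) j i * xtil k i / xtil (k + m) j :=
      fun j i => le_trans hc0 (hc j i)
    constructor
    · simp only [hMxdef, hmxdef]
      refine Finset.sup'_le _ _ fun j _ => ?_
      rw [htrans m k j]
      exact wavg_le _ _ (hw j) (hwsum m k j) (hc j)
    · simp only [hMxdef, hmxdef]
      refine Finset.le_inf' _ _ fun j _ => ?_
      rw [htrans m k j]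
      exact wavg_ge _ _ (hw j) (hwsum m k j) (hc j)
  have hwnn : ∀ (m k : ℕ) (j i : Fin n), 0 ≤ (Hbar ^ m) j i * xtil k i / xtil (k + m) j :=
    fun m k j i => div_nonneg (mul_nonneg (hpownn m j i) (hxpos k i).le) (hxpos (k + m) j).le
  have hmono : ∀ (m k : ℕ), Mx (k + m) ≤ Mx k ∧ mx k ≤ mx (k + m) := by
    intro m k
    have h := hkey m k 0 le_rfl (fun j i => hwnn m k j i)
    exact ⟨by linarith [h.1], by linarith [h.2]⟩
  have hMant : Antitone Mx := antitone_nat_of_succ_le fun k => (hmono 1 k).1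
  have hmmon : Monotone mx := monotone_nat_of_le_succ fun k => (hmono 1 k).2
  have hmleM : ∀ k, mx k ≤ Mx k := by
    intro k
    simp only [hMxdef, hmxdef]
    exact le_trans (Finset.inf'_le (r k) (Finset.mem_univ (Classical.arbitrary _)))
      (Finset.le_sup' (r k) (Finset.mem_univ _))
  have hbddM : BddBelow (Set.range Mx) := by
    refine ⟨mx 0, ?_⟩
    rintro x ⟨k, rfl⟩
    exact le_trans (hmmon (Nat.zero_le k)) (hmleM k)
  have hbddm : BddAbove (Set.range mx) := by
    refine ⟨Mx 0, ?_⟩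
    rintro x ⟨k, rfl⟩
    exact le_trans (hmleM k) (hMant (Nat.zero_le k))
  have hMtend : Filter.Tendsto Mx Filter.atTop (nhds (⨅ k, Mx k)) :=
    tendsto_atTop_ciInf hMant hbddM
  have hmtend : Filter.Tendsto mx Filter.atTop (nhds (⨆ k, mx k)) :=
    tendsto_atTop_ciSup hmmon hbddm
  set L := ⨅ k, Mx k with hLdef
  set l := ⨆ k, mx k with hldef
  have hlL : l ≤ L := le_of_tendsto_of_tendsto' hmtend hMtend hmleM
  have hcontr : ∀ k, Mx (k + K + K) - mx (k + K + K)
      ≤ (1 - 2 * (δ * δ)) * (Mx (k + K) - mx (k + K)) := by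
    intro k
    have hc : ∀ j i : Fin n, δ * δ ≤ (Hbar ^ K) j i * xtil (k + K) i / xtil (k + K + K) j := by
      intro j i
      rw [le_div_iff₀ (hxpos (k + K + K) j)]
      calc δ * δ * xtil (k + K + K) j ≤ δ * δ * n :=
            mul_le_mul_of_nonneg_left (hxle _ j) (mul_nonneg hδpos.le hδpos.le)
        _ = δ * (δ * n) := by ring
        _ ≤ (Hbar ^ K) j i * xtil (k + K) i :=
            mul_le_mul (hδle j i) (hxlb k i)
              (mul_nonneg hδpos.le (Nat.cast_nonneg n)) (hpownn K j i)
    have h := hkey K (k + K) (δ * δ) (mul_nonneg hδpos.le hδpos.le) hc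
    nlinarith [h.1, h.2]
  have hshift1 : Filter.Tendsto (fun k : ℕ => k + K) Filter.atTop Filter.atTop :=
    Filter.tendsto_add_atTop_nat K
  have hshift2 : Filter.Tendsto (fun k : ℕ => k + K + K) Filter.atTop Filter.atTop :=
    hshift1.comp hshift1
  have hA : Filter.Tendsto (fun k => Mx (k + K + K) - mx (k + K + K)) Filter.atTop
      (nhds (L - l)) := (hMtend.comp hshift2).sub (hmtend.comp hshift2)
  have hB : Filter.Tendsto (fun k => (1 - 2 * (δ * δ)) * (Mx (k + K) - mx (k + K)))
      Filter.atTop (nhds ((1 - 2 * (δ * δ)) * (L - l))) :=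
    ((hMtend.comp hshift1).sub (hmtend.comp hshift1)).const_mul _
  have hle := le_of_tendsto_of_tendsto' hA hB hcontr
  have hLl : L = l := by
    refine le_antisymm ?_ hlL
    nlinarith [mul_pos hδpos hδpos, hlL, hle]
  have havg : ∀ k, mx k ≤ (∑ i, S i) / n ∧ (∑ i, S i) / n ≤ Mx k := by
    intro k
    have hwn : ∀ j : Fin n, 0 ≤ xtil k j / (n : ℝ) :=
      fun j => div_nonneg (hxpos k j).le (Nat.cast_nonneg n)
    have hws : ∑ j, xtil k j / (n : ℝ) = 1 := by
      rw [← Finset.sum_div, hxsum k]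
      exact div_self (by exact_mod_cast hn.ne')
    have hid : (∑ i, S i) / (n : ℝ) = ∑ j, (xtil k j / (n : ℝ)) * r k j := by
      have hterm : ∀ j, (xtil k j / (n : ℝ)) * r k j = ytil k j / n := by
        intro j
        have hj := (hxpos k j).ne'
        simp only [hrdef]
        field_simp
      rw [Finset.sum_congr rfl fun j _ => hterm j, ← Finset.sum_div, hysum k]
    constructor
    · rw [hid]
      have h := wavg_ge (fun j => xtil k j / (n : ℝ)) (r k) hwn hws (c := 0) hwn
      simp only [hmxdef]
      linarith [h]
    · rw [hid]
      have h := wavg_le (fun j => xtil k j / (n : ℝ)) (r k) hwn hws (c := 0) hwn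
      simp only [hMxdef]
      linarith [h]
  have hSl : (∑ i, S i) / (n : ℝ) = l := by
    have h1 : (∑ i, S i) / (n : ℝ) ≤ L := le_ciInf fun k => (havg k).2
    have h2 : l ≤ (∑ i, S i) / (n : ℝ) := ciSup_le fun k => (havg k).1
    rw [hLl] at h1
    exact le_antisymm h1 h2
  intro j
  have hrw : (fun k => ytil k j / xtil k j) = fun k => r k j := by
    funext k; simp [hrdef]
  rw [hrw, hSl]
  refine tendsto_of_tendsto_of_tendsto_of_le_of_le (g := mx) (h := Mx) hmtend ?_ ?_ ?_
  · rw [← hLl]; exact hMtend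
  · intro k
    simp only [hmxdef]
    exact Finset.inf'_le (r k) (Finset.mem_univ j)
  · intro k
    simp only [hMxdef]
    exact Finset.le_sup' (r k) (Finset.mem_univ j)
end

section
/- (Wolfowitz-type ergodicity of forward products.) Fix ε > 0 and an integer B ≥ 1. Let (A[k])_{k≥0} be a sequence of column stochastic matrices in ℝ^{n×n} such that: (i) every diagonal entry satisfies A_{jj}[k] ≥ ε; (ii) every entry of A[k] is either 0 or at least ε; and (iii) for every k ∈ ℕ, the directed graph on n nodes whose edge set is the union over t = kB, kB+1, …, kB+B−1 of {(j, i) : A_{ji}[t] > 0, i ≠ j} is strongly connected. Then the forward products B_{k:0} = A[k] A[k−1] ⋯ A[0] satisfy: for every row index j and every pair of column indices i, i′, the difference (B_{k:0})_{ji} − (B_{k:0})_{ji′} converges to 0 as k → ∞; i.e., all columns of B_{k:0} asymptotically coincide. -/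
/-!
Over a window of `L = (n - 1) B` steps the forward product is entrywise at least `ε ^ L`:
positive diagonals make the support of every column grow monotonically, strong connectivity of
a block of `B` steps adds at least one new index to it, and entries that are `0` or `≥ ε`
multiply to entries that are `0` or `≥ ε ^ L`. A column stochastic matrix with all entries
`≥ γ` contracts the `ℓ¹` norm of zero-sum vectors by the factor `1 - n γ` (Dobrushin), and
never expands it, so `B_{k:0} (eᵢ - eᵢ')` decays geometrically.
-/

open Finset Matrix Filter Topology

theorem Relation.TransGen.exists_rel_crossing {α : Type*} {r : α → α → Prop} {p : α → Prop}
    {a b : α} (h : Relation.TransGen r a b) (ha : ¬ p a) (hb : p b) :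
    ∃ x y, ¬ p x ∧ p y ∧ r x y := by
  induction h with
  | single hr => exact ⟨_, _, ha, hb, hr⟩
  | @tail c d _ hcd ih =>
    by_cases hc : p c
    · exact ih hc
    · exact ⟨c, d, hc, hb, hcd⟩

theorem Matrix.mul_le_dotProduct {ι R : Type*} [Fintype ι] [Semiring R] [PartialOrder R]
    [IsOrderedRing R] {u v : ι → R} (hu : ∀ l, 0 ≤ u l) (hv : ∀ l, 0 ≤ v l) (l : ι) :
    u l * v l ≤ u ⬝ᵥ v :=
  single_le_sum (f := fun l => u l * v l) (fun l _ => mul_nonneg (hu l) (hv l)) (mem_univ l)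

theorem Matrix.sum_abs_mulVec_le {ι : Type*} [Fintype ι] {D : Matrix ι ι ℝ}
    (hcol : ∀ l, ∑ j, D j l = 1) {γ : ℝ} (hγ : ∀ j l, γ ≤ D j l) {w : ι → ℝ} (hw : ∑ l, w l = 0) :
    ∑ j, |(D *ᵥ w) j| ≤ (1 - Fintype.card ι * γ) * ∑ l, |w l| := by
  -- subtracting `γ` from every entry does not change `D *ᵥ w`, and leaves a nonnegative matrix
  have hshift : ∀ j, (D *ᵥ w) j = ∑ l, (D j l - γ) * w l := fun j => by
    simp only [mulVec, dotProduct, sub_mul, sum_sub_distrib, ← mul_sum, hw, mul_zero, sub_zero]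
  calc ∑ j, |(D *ᵥ w) j| ≤ ∑ j, ∑ l, (D j l - γ) * |w l| := by
        refine sum_le_sum fun j _ => ?_
        rw [hshift]
        refine (abs_sum_le_sum_abs _ _).trans (sum_le_sum fun l _ => ?_)
        rw [abs_mul, abs_of_nonneg (sub_nonneg.2 (hγ j l))]
    _ = ∑ l, (1 - Fintype.card ι * γ) * |w l| := by
        rw [sum_comm]
        refine sum_congr rfl fun l _ => ?_
        rw [← sum_mul, sum_sub_distrib, hcol, sum_const, card_univ, nsmul_eq_mul]
    _ = (1 - Fintype.card ι * γ) * ∑ l, |w l| := (mul_sum _ _ _).symm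

variable {ι : Type*} [Fintype ι] [DecidableEq ι]

/-- `forwardProd A s m = A (s + m - 1) * ⋯ * A s`, the paper's `B_{s+m-1:s}`. -/
def forwardProd {R : Type*} [Semiring R] (A : ℕ → Matrix ι ι R) (s : ℕ) : ℕ → Matrix ι ι R
  | 0 => 1
  | m + 1 => A (s + m) * forwardProd A s m

section Algebra

variable {R : Type*} [Semiring R] (A : ℕ → Matrix ι ι R)

@[simp]
theorem forwardProd_zero (s : ℕ) : forwardProd A s 0 = 1 := rfl

@[simp]
theorem forwardProd_succ (s m : ℕ) : forwardProd A s (m + 1) = A (s + m) * forwardProd A s m :=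
  rfl

theorem forwardProd_add (s a b : ℕ) :
    forwardProd A s (a + b) = forwardProd A (s + b) a * forwardProd A s b := by
  induction a with
  | zero => simp
  | succ a ih =>
    rw [Nat.add_right_comm, forwardProd_succ, ih, forwardProd_succ, Matrix.mul_assoc,
      Nat.add_assoc, Nat.add_comm a b]

theorem forwardProd_mul (s L m : ℕ) :
    forwardProd A s (m * L) = forwardProd (fun k => forwardProd A (s + k * L) L) 0 m := by
  induction m with
  | zero => simp
  | succ m ih => rw [Nat.succ_mul, Nat.add_comm (m * L), forwardProd_add, ih, forwardProd_succ,
      Nat.zero_add]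

theorem forwardProd_mem_colStochastic [PartialOrder R] [IsOrderedRing R] {A : ℕ → Matrix ι ι R}
    (hA : ∀ k, A k ∈ colStochastic R ι) (s m : ℕ) : forwardProd A s m ∈ colStochastic R ι := by
  induction m with
  | zero => exact one_mem _
  | succ m ih => exact mul_mem (hA _) ih

end Algebra

section Positivity

variable {A : ℕ → Matrix ι ι ℝ}

theorem forwardProd_nonneg (hA : ∀ k i j, 0 ≤ A k i j) (s m : ℕ) (i j : ι) :
    0 ≤ forwardProd A s m i j := by
  induction m generalizing i j with
  | zero => rw [forwardProd_zero, one_apply]; split_ifs <;> norm_num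
  | succ m ih => exact sum_nonneg fun l _ => mul_nonneg (hA _ _ _) (ih l j)

theorem forwardProd_diag_pos (hA : ∀ k i j, 0 ≤ A k i j) (hdiag : ∀ k j, 0 < A k j j)
    (s m : ℕ) (i : ι) : 0 < forwardProd A s m i i := by
  induction m with
  | zero => simp
  | succ m ih =>
    exact (mul_pos (hdiag _ i) ih).trans_le
      (mul_le_dotProduct (hA _ i) (fun l => forwardProd_nonneg hA s m l i) i)

theorem forwardProd_pos_of_pos (hA : ∀ k i j, 0 ≤ A k i j) (hdiag : ∀ k j, 0 < A k j j)
    {s m t : ℕ} (ht : t < m) {j l : ι} (h : 0 < A (s + t) j l) :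
    0 < forwardProd A s m j l := by
  induction m with
  | zero => omega
  | succ m ih =>
    have hle := mul_le_dotProduct (hA (s + m) j) (fun i => forwardProd_nonneg hA s m i l)
    rcases (Nat.lt_succ_iff.1 ht).lt_or_eq with ht | rfl
    · exact (mul_pos (hdiag _ j) (ih ht)).trans_le (hle j)
    · exact (mul_pos h (forwardProd_diag_pos hA hdiag s t l)).trans_le (hle l)

theorem forwardProd_eq_zero_or_pow_le {ε : ℝ} (hA : ∀ k i j, 0 ≤ A k i j) (hε : 0 ≤ ε)
    (hent : ∀ k i j, A k i j = 0 ∨ ε ≤ A k i j) (s m : ℕ) (i j : ι) :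
    forwardProd A s m i j = 0 ∨ ε ^ m ≤ forwardProd A s m i j := by
  induction m generalizing i j with
  | zero => rw [forwardProd_zero, one_apply]; split_ifs <;> simp
  | succ m ih =>
    by_cases h : ∃ l, A (s + m) i l ≠ 0 ∧ forwardProd A s m l j ≠ 0
    · obtain ⟨l, hAl, hPl⟩ := h
      right
      calc ε ^ (m + 1) = ε * ε ^ m := pow_succ' ε m
        _ ≤ A (s + m) i l * forwardProd A s m l j :=
          mul_le_mul ((hent _ _ _).resolve_left hAl) ((ih l j).resolve_left hPl)
            (pow_nonneg hε m) (hA _ _ _)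
        _ ≤ _ := mul_le_dotProduct (hA _ i) (fun l => forwardProd_nonneg hA s m l j) l
    · push Not at h
      left
      refine sum_eq_zero fun l _ => ?_
      by_cases hl : A (s + m) i l = 0 <;> simp [hl, h l]

end Positivity

section Support

theorem card_filter_pos_mulVec_ge {M : Matrix ι ι ℝ} (hM : ∀ j l, 0 ≤ M j l)
    (hdiag : ∀ j, 0 < M j j) (hconn : ∀ a b, a ≠ b → Relation.TransGen (fun j l => 0 < M j l) a b)
    {v : ι → ℝ} (hv : ∀ l, 0 ≤ v l) {i : ι} (hi : 0 < v i) :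
    min (#{l | 0 < v l} + 1) (Fintype.card ι) ≤ #{j | 0 < (M *ᵥ v) j} := by
  set S : Finset ι := {l | 0 < v l}
  set T : Finset ι := {j | 0 < (M *ᵥ v) j}
  have hST : ∀ {j l}, 0 < M j l → l ∈ S → j ∈ T := fun {j l} hjl hl => by
    simp only [S, T, mem_filter, mem_univ, true_and] at hl ⊢
    exact (mul_pos hjl hl).trans_le (mul_le_dotProduct (hM j) hv l)
  have hsub : S ⊆ T := fun l hl => hST (hdiag l) hl
  by_cases hS : S = univ
  · rw [hS, univ_subset_iff] at hsub
    rw [hsub, card_univ]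
    exact min_le_right _ _
  · obtain ⟨b, hb⟩ : ∃ b, b ∉ S := by simpa [eq_univ_iff_forall] using hS
    have hiS : i ∈ S := by simpa [S] using hi
    obtain ⟨j, l, hj, hl, hjl⟩ :=
      (hconn b i fun hbi => hb (hbi ▸ hiS)).exists_rel_crossing hb hiS
    calc _ ≤ #S + 1 := min_le_left _ _
      _ = #(insert j S) := (card_insert_of_notMem hj).symm
      _ ≤ #T := card_le_card (insert_subset (hST hjl hl) hsub)

variable {M : ℕ → Matrix ι ι ℝ} (hM : ∀ k j l, 0 ≤ M k j l) (hdiag : ∀ k j, 0 < M k j j)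
  (hconn : ∀ k a b, a ≠ b → Relation.TransGen (fun j l => 0 < M k j l) a b)
include hM hdiag hconn

theorem card_filter_pos_forwardProd_mulVec_ge {v : ι → ℝ} (hv : ∀ l, 0 ≤ v l) {i : ι} (hi : 0 < v i)
    (m : ℕ) :
    min (#{l | 0 < v l} + m) (Fintype.card ι) ≤ #{j | 0 < (forwardProd M 0 m *ᵥ v) j} := by
  induction m with
  | zero => simp
  | succ m ih =>
    have hle := fun j => mul_le_dotProduct (fun l => forwardProd_nonneg hM 0 m j l) hv
    have hstep := card_filter_pos_mulVec_ge (v := forwardProd M 0 m *ᵥ v) (hM m) (hdiag m) (hconn m)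
      (fun j => (mul_nonneg (forwardProd_nonneg hM 0 m j j) (hv j)).trans (hle j j))
      ((mul_pos (forwardProd_diag_pos hM hdiag 0 m i) hi).trans_le (hle i i))
    rw [forwardProd_succ, Nat.zero_add, ← mulVec_mulVec]
    omega

theorem forwardProd_card_sub_one_pos (j i : ι) : 0 < forwardProd M 0 (Fintype.card ι - 1) j i := by
  have h := card_filter_pos_forwardProd_mulVec_ge hM hdiag hconn (v := Pi.single i 1) (i := i)
    (fun l => by by_cases hl : l = i <;> simp [hl]) (by simp) (Fintype.card ι - 1)
  have hsingle : #{l | 0 < (Pi.single i 1 : ι → ℝ) l} = 1 := by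
    rw [card_eq_one]
    exact ⟨i, by ext l; by_cases hl : l = i <;> simp [hl]⟩
  rw [hsingle, Nat.add_sub_cancel' (Fintype.card_pos_iff.2 ⟨i⟩), min_self] at h
  simpa [mulVec_single_one] using filter_card_eq (h.antisymm' (card_le_univ _)) j (mem_univ j)

end Support

theorem forwardProd_window_pos {A : ℕ → Matrix ι ι ℝ} {B : ℕ} (hA : ∀ k i j, 0 ≤ A k i j)
    (hdiag : ∀ k j, 0 < A k j j)
    (hconn : ∀ k : ℕ, ∀ a b : ι, a ≠ b →
      Relation.TransGen (fun j i => (∃ t < B, 0 < A (k * B + t) j i) ∧ i ≠ j) a b)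
    (k : ℕ) (j i : ι) : 0 < forwardProd A (k * B) ((Fintype.card ι - 1) * B) j i := by
  rw [forwardProd_mul]
  refine forwardProd_card_sub_one_pos (M := fun m => forwardProd A (k * B + m * B) B)
    (fun _ _ _ => forwardProd_nonneg hA ..) (fun _ _ => forwardProd_diag_pos hA hdiag ..)
    (fun m a b hab => ?_) j i
  refine Relation.TransGen.mono ?_ a b (hconn (k + m) a b hab)
  rintro x y ⟨⟨t, ht, hxy⟩, -⟩
  rw [add_mul] at hxy
  exact forwardProd_pos_of_pos hA hdiag ht hxy

theorem Antitone.tendsto_zero_of_contracts {g : ℕ → ℝ} (hg : Antitone g) (hg0 : ∀ t, 0 ≤ g t)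
    {L : ℕ} (hL : 0 < L) {r : ℝ} (hr0 : 0 ≤ r) (hr1 : r < 1)
    (hcontr : ∀ m, g (L + m * L) ≤ r * g (m * L)) : Tendsto g atTop (𝓝 0) := by
  have hgeom : ∀ m, g (m * L) ≤ r ^ m * g 0 := fun m => by
    induction m with
    | zero => simp
    | succ m ih =>
      calc g ((m + 1) * L) = g (L + m * L) := by rw [Nat.succ_mul, Nat.add_comm]
        _ ≤ r * (r ^ m * g 0) := (hcontr m).trans (mul_le_mul_of_nonneg_left ih hr0)
        _ = r ^ (m + 1) * g 0 := by ring
  have hlim : Tendsto (fun t => r ^ (t / L) * g 0) atTop (𝓝 0) := by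
    simpa using ((tendsto_pow_atTop_nhds_zero_of_lt_one hr0 hr1).comp
      (Nat.tendsto_div_const_atTop hL.ne')).mul_const (g 0)
  exact squeeze_zero hg0 (fun t => (hg (Nat.div_mul_le_self t L)).trans (hgeom _)) hlim

theorem tendsto_forwardProd_mulVec_zero {A : ℕ → Matrix ι ι ℝ}
    (hA : ∀ k, A k ∈ colStochastic ℝ ι) {L : ℕ} (hL : 0 < L) {γ : ℝ} (hγ : 0 < γ)
    (hwin : ∀ m j i, γ ≤ forwardProd A (m * L) L j i) {x : ι → ℝ} (hx : ∑ l, x l = 0) (j : ι) :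
    Tendsto (fun t => (forwardProd A 0 t *ᵥ x) j) atTop (𝓝 0) := by
  have hP := forwardProd_mem_colStochastic hA
  set v := fun t => forwardProd A 0 t *ᵥ x
  set g := fun t => ∑ l, |v t l|
  have hcontr : ∀ s t δ, (∀ j l, δ ≤ forwardProd A t s j l) →
      g (s + t) ≤ (1 - Fintype.card ι * δ) * g t := fun s t δ hδ => by
    have hv : v (s + t) = forwardProd A t s *ᵥ v t := by
      simp only [v, forwardProd_add, Nat.zero_add, mulVec_mulVec]
    simp only [g, hv]
    exact sum_abs_mulVec_le (sum_col_of_mem_colStochastic (hP t s)) hδ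
      ((sum_mulVec_of_mem_colStochastic (hP 0 t)).trans hx)
  have hanti : Antitone g := antitone_nat_of_succ_le fun t => by
    simpa [Nat.add_comm 1] using hcontr 1 t 0 fun _ _ => nonneg_of_mem_colStochastic (hP t 1)
  have hnγ : Fintype.card ι * γ ≤ 1 := by
    calc Fintype.card ι * γ = ∑ _l : ι, γ := by simp
      _ ≤ ∑ l, forwardProd A 0 L l j := sum_le_sum fun l _ => by simpa using hwin 0 l j
      _ = 1 := sum_col_of_mem_colStochastic (hP 0 L) j
  have hg := hanti.tendsto_zero_of_contracts (fun t => sum_nonneg fun l _ => abs_nonneg _) hL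
    (sub_nonneg.2 hnγ)
    (sub_lt_self _ (mul_pos (Nat.cast_pos.2 (Fintype.card_pos_iff.2 ⟨j⟩)) hγ))
    fun m => hcontr L (m * L) γ (hwin m)
  exact squeeze_zero_norm (fun t => single_le_sum (f := fun l => |v t l|)
    (fun l _ => abs_nonneg _) (mem_univ j)) hg

/-- Wolfowitz-type ergodicity of forward products: for column stochastic
matrices `A[k]` with diagonal entries `≥ ε`, all entries either `0` or `≥ ε`, and the
union graph over each window `[kB, kB + B - 1]` strongly connected, the forward products
`B_{k:0} = A[k] ⋯ A[0]` have asymptotically coinciding columns. -/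
theorem stmt10 (n : ℕ) (ε : ℝ) (hε : 0 < ε) (B : ℕ) (hB : 1 ≤ B)
    (A : ℕ → Matrix (Fin n) (Fin n) ℝ)
    (hnn : ∀ k i j, 0 ≤ A k i j) (hcol : ∀ k j, ∑ i, A k i j = 1)
    (hdiag : ∀ k j, ε ≤ A k j j)
    (hent : ∀ k i j, A k i j = 0 ∨ ε ≤ A k i j)
    (hconn : ∀ k : ℕ, ∀ a b : Fin n, a ≠ b →
      Relation.TransGen (fun j i => (∃ t < B, 0 < A (k * B + t) j i) ∧ i ≠ j) a b)
    (Bp : ℕ → Matrix (Fin n) (Fin n) ℝ)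
    (hBp0 : Bp 0 = A 0) (hBpk : ∀ k, Bp (k + 1) = A (k + 1) * Bp k) :
    ∀ j i i', Filter.Tendsto (fun k => Bp k j i - Bp k j i') Filter.atTop (nhds 0) := by
  intro j i i'
  rcases eq_or_ne i i' with rfl | hii'
  · simp
  have hn : 1 < n := by simpa using Fintype.one_lt_card_iff_nontrivial.2 ⟨i, i', hii'⟩
  set L := (n - 1) * B
  have hwin : ∀ m a b, ε ^ L ≤ forwardProd A (m * L) L a b := fun m a b => by
    have hpos := forwardProd_window_pos hnn (fun k j => hε.trans_le (hdiag k j)) hconn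
      (m * (n - 1)) a b
    rw [Fintype.card_fin, Nat.mul_assoc] at hpos
    exact (forwardProd_eq_zero_or_pow_le hnn hε.le hent _ _ a b).resolve_left hpos.ne'
  have hBp : ∀ k, Bp k = forwardProd A 0 (k + 1) := fun k => by
    induction k with
    | zero => simp [hBp0]
    | succ k ih => rw [hBpk, ih, forwardProd_succ (m := k + 1), Nat.zero_add]
  have hlim := tendsto_forwardProd_mulVec_zero
    (fun k => mem_colStochastic_iff_sum.2 ⟨hnn k, hcol k⟩) (Nat.mul_pos (by omega) hB)
    (pow_pos hε L) hwin (x := Pi.single i 1 - Pi.single i' 1) (by simp) j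
  simpa [Function.comp_def, hBp, mulVec_sub, mulVec_single_one, -forwardProd_succ]
    using hlim.comp (tendsto_add_atTop_nat 1)
end

section
/- Let (A[k])_{k≥0} be a sequence of column stochastic matrices in ℝ^{n×n} whose forward products B_{k:0} = A[k] ⋯ A[0] satisfy: for every row index j and all column indices i, i′, (B_{k:0})_{ji} − (B_{k:0})_{ji′} → 0 as k → ∞, and there exists δ > 0 such that (B_{k:0})_{jj} ≥ δ for all j and k. Let y0 ∈ ℝ^n be arbitrary and x0 ∈ ℝ^n have all entries strictly positive. Then for every j, the ratio (B_{k:0} y0)_j / (B_{k:0} x0)_j converges, as k → ∞, to (Σ_{i=1}^n (y0)_i)/(Σ_{i=1}^n (x0)_i); in particular, with x0 = 𝟏 the limit is the average (Σ_i (y0)_i)/n. -/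
/-!
Write `c k = (B k) j j ≥ δ`. Ergodicity says that row `j` of `B k` is asymptotically the constant
row `c k`, so `(B k *ᵥ v) j = c k * ∑ i, v i + o(1)` for every `v`. Dividing by `c k`, which stays
away from `0`, gives `(B k *ᵥ v) j / c k → ∑ i, v i`. The ratio of the two iterates is the quotient of
these normalized quantities, and the limit of the denominator is `∑ i, x0 i > 0`.
-/

open Filter Topology Matrix

theorem Matrix.tendsto_mulVec_apply_sub_mul_sum {ι α R : Type*} [Fintype ι] [CommRing R]
    [TopologicalSpace R] [IsTopologicalRing R] {l : Filter α} {M : α → Matrix ι ι R} {j : ι}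
    (h : ∀ i, Tendsto (fun k => M k j i - M k j j) l (𝓝 0)) (v : ι → R) :
    Tendsto (fun k => (M k *ᵥ v) j - M k j j * ∑ i, v i) l (𝓝 0) := by
  have hsum : Tendsto (fun k => ∑ i, (M k j i - M k j j) * v i) l (𝓝 (∑ i : ι, 0 * v i)) :=
    tendsto_finsetSum _ fun i _ => (h i).mul_const (v i)
  simp only [zero_mul, Finset.sum_const_zero] at hsum
  refine hsum.congr fun k => ?_
  simp only [mulVec, dotProduct, Finset.mul_sum, ← Finset.sum_sub_distrib, sub_mul]

theorem tendsto_div_of_tendsto_sub_mul {α : Type*} {l : Filter α} {a c : α → ℝ} {s δ : ℝ}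
    (hδ : 0 < δ) (hc : ∀ k, δ ≤ c k) (h : Tendsto (fun k => a k - c k * s) l (𝓝 0)) :
    Tendsto (fun k => a k / c k) l (𝓝 s) := by
  have hbound : Tendsto (fun k => |a k - c k * s| / δ) l (𝓝 0) := by
    simpa using h.abs.div_const δ
  have hdiff : Tendsto (fun k => a k / c k - s) l (𝓝 0) := by
    refine squeeze_zero_norm (fun k => ?_) hbound
    have hck : 0 < c k := hδ.trans_le (hc k)
    rw [Real.norm_eq_abs, div_sub' hck.ne', abs_div, abs_of_pos hck]
    exact div_le_div_of_nonneg_left (abs_nonneg _) hδ (hc k)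
  simpa using hdiff.add_const s

theorem stmt14_general (n : ℕ)
    (B : ℕ → Matrix (Fin n) (Fin n) ℝ)
    (hergo : ∀ j i i', Filter.Tendsto (fun k => B k j i - B k j i')
      Filter.atTop (nhds 0))
    (δ : ℝ) (hδ : 0 < δ) (hdiag : ∀ k j, δ ≤ B k j j)
    (y0 x0 : Fin n → ℝ) (hx0 : ∀ i, 0 < x0 i) :
    ∀ j, Filter.Tendsto
      (fun k => ((B k).mulVec y0) j / ((B k).mulVec x0) j)
      Filter.atTop (nhds ((∑ i, y0 i) / (∑ i, x0 i))) := by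
  intro j
  have hsum_x0 : 0 < ∑ i, x0 i := Finset.sum_pos (fun i _ => hx0 i) ⟨j, Finset.mem_univ j⟩
  have normalized (v : Fin n → ℝ) :
      Tendsto (fun k => (B k *ᵥ v) j / B k j j) atTop (𝓝 (∑ i, v i)) :=
    tendsto_div_of_tendsto_sub_mul hδ (fun k => hdiag k j)
      (tendsto_mulVec_apply_sub_mul_sum (fun i => hergo j i j) v)
  refine ((normalized y0).div (normalized x0) hsum_x0.ne').congr fun k => ?_
  exact div_div_div_cancel_right₀ (hδ.trans_le (hdiag k j)).ne' _ _

/-- ratio-convergence step: if the forward products `B_{k:0}` of column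
stochastic matrices have asymptotically coinciding columns and uniformly positive
diagonal entries, then for arbitrary `y0` and entrywise positive `x0`, the ratio
`(B_{k:0} y0)_j / (B_{k:0} x0)_j` converges to `(∑ i, y0 i) / (∑ i, x0 i)`. -/
theorem stmt14 (n : ℕ) (A : ℕ → Matrix (Fin n) (Fin n) ℝ)
    (hnn : ∀ k i j, 0 ≤ A k i j) (hcol : ∀ k j, ∑ i, A k i j = 1)
    (B : ℕ → Matrix (Fin n) (Fin n) ℝ)
    (hB0 : B 0 = A 0) (hBk : ∀ k, B (k + 1) = A (k + 1) * B k)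
    (hergo : ∀ j i i', Filter.Tendsto (fun k => B k j i - B k j i')
      Filter.atTop (nhds 0))
    (δ : ℝ) (hδ : 0 < δ) (hdiag : ∀ k j, δ ≤ B k j j)
    (y0 x0 : Fin n → ℝ) (hx0 : ∀ i, 0 < x0 i) :
    ∀ j, Filter.Tendsto
      (fun k => ((B k).mulVec y0) j / ((B k).mulVec x0) j)
      Filter.atTop (nhds ((∑ i, y0 i) / (∑ i, x0 i))) :=
  stmt14_general n B hergo δ hδ hdiag y0 x0 hx0
end
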